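/- For all integers n ≥ 2 and 1 ≤ a ≤ n−1, one has (φ(a)·φ(n−a+1) + φ(n−a)·φ(a+1) − φ(a)·φ(n−a)) / φ(n) = φ(a)·φ(n−a) / φ(n−1), as an identity of real numbers. -/

import Mathlib

/-- Number of rooted binary phylogenetic trees on `m` leaves:
`phi m = (2m-2)! / (2^(m-1) * (m-1)!)` (so `phi m = (2m-3)!!` for `m ≥ 2`, `phi 1 = 1`). -/
noncomputable def phi (m : ℕ) : ℝ :=
  (Nat.factorial (2 * m - 2) : ℝ) / ((2 : ℝ) ^ (m - 1) * (Nat.factorial (m - 1) : ℝ))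

/-- Clade probability of a fixed subset of size `a` among `n` leaves under the YHK model:
`p_n(a) = (2n/(a(a+1))) * C(n,a)⁻¹` for `a < n`, and `p_n(n) = 1`. -/
noncomputable def pYHK (n a : ℕ) : ℝ :=
  if a = n then 1 else (2 * (n : ℝ) / ((a : ℝ) * ((a : ℝ) + 1))) * ((n.choose a : ℝ))⁻¹

/-- Clade probability under the PDA model:
`q_n(a) = C(n-1,a-1) * C(2n-2,2a-2)⁻¹` for `a < n`, and `q_n(n) = 1`. -/
noncomputable def qPDA (n a : ℕ) : ℝ :=
  if a = n then 1
  else (((n - 1).choose (a - 1) : ℝ)) * ((((2 * n - 2).choose (2 * a - 2)) : ℝ))⁻¹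

/-- `p_n(a, n-a) = (2/(n-1)) * C(n,a)⁻¹`: the YHK probability that both a fixed subset of
size `a` and its complement are clades. -/
noncomputable def pPair (n a : ℕ) : ℝ :=
  (2 / ((n : ℝ) - 1)) * ((n.choose a : ℝ))⁻¹

/-- `q_n(a, n-a) = (1/(2n-2a-1)) * C(n-1,a-1) * C(2n-2,2a-2)⁻¹`: the PDA probability that
both a fixed subset of size `a` and its complement are clades. -/
noncomputable def qPair (n a : ℕ) : ℝ :=
  (1 / (2 * (n : ℝ) - 2 * (a : ℝ) - 1)) * (((n - 1).choose (a - 1) : ℝ)) *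
    ((((2 * n - 2).choose (2 * a - 2)) : ℝ))⁻¹

/-- Clan probability of a fixed subset of size `a` under the YHK model:
`p*_n(a) = 2n * [1/(a(a+1)) + 1/((n-a)(n-a+1)) - 1/(n(n-1))] * C(n,a)⁻¹`. -/
noncomputable def pStar (n a : ℕ) : ℝ :=
  2 * (n : ℝ) *
    (1 / ((a : ℝ) * ((a : ℝ) + 1)) + 1 / (((n : ℝ) - (a : ℝ)) * ((n : ℝ) - (a : ℝ) + 1)) -
      1 / ((n : ℝ) * ((n : ℝ) - 1))) * ((n.choose a : ℝ))⁻¹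

/-- Clan probability of a fixed subset of size `a` under the PDA model:
`q*_n(a) = phi(a) * phi(n-a) / phi(n-1)`. -/
noncomputable def qStar (n a : ℕ) : ℝ := phi a * phi (n - a) / phi (n - 1)

/-- `u_n(a) = a(a+1)/(n(n-1)) - 1/(2n-2a-1)`: difference of the conditional probabilities
(YHK minus PDA) that both a clade `A` of size `a` and its complement are clades, given `A`
is a clade. -/
noncomputable def uDiff (n a : ℕ) : ℝ :=
  (a : ℝ) * ((a : ℝ) + 1) / ((n : ℝ) * ((n : ℝ) - 1)) - 1 / (2 * (n : ℝ) - 2 * (a : ℝ) - 1)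


lemma phi_pos (m : ℕ) : 0 < phi m := by
  unfold phi
  positivity

lemma phi_step (k : ℕ) : phi (k + 2) = (2 * (k : ℝ) + 1) * phi (k + 1) := by
  unfold phi
  have h1 : 2 * (k + 2) - 2 = 2 * k + 2 := by omega
  have h2 : 2 * (k + 1) - 2 = 2 * k := by omega
  have h3 : (k + 2) - 1 = k + 1 := by omega
  have h4 : (k + 1) - 1 = k := by omega
  rw [h1, h2, h3, h4]
  have hf1 : (Nat.factorial (2 * k + 2) : ℝ) =
      (2 * k + 2) * ((2 * k + 1) * (Nat.factorial (2 * k))) := by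
    rw [show 2 * k + 2 = (2 * k + 1) + 1 from rfl, Nat.factorial_succ, Nat.factorial_succ]
    push_cast; ring
  have hf2 : (Nat.factorial (k + 1) : ℝ) = (k + 1) * Nat.factorial k := by
    rw [Nat.factorial_succ]; push_cast; ring
  rw [hf1, hf2, pow_succ]
  have hk : (Nat.factorial k : ℝ) ≠ 0 := by positivity
  have h2k : ((2:ℝ) ^ k) ≠ 0 := by positivity
  field_simp

/-- the clan probability identity
`(phi(a) phi(n-a+1) + phi(n-a) phi(a+1) - phi(a) phi(n-a)) / phi(n) = phi(a) phi(n-a) / phi(n-1)`. -/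
theorem pda_clan_formula (n a : ℕ) (hn : 2 ≤ n) (ha : 1 ≤ a) (han : a ≤ n - 1) :
    (phi a * phi (n - a + 1) + phi (n - a) * phi (a + 1) - phi a * phi (n - a)) / phi n =
      phi a * phi (n - a) / phi (n - 1) := by
  obtain ⟨k, rfl⟩ : ∃ k, a = k + 1 := ⟨a - 1, by omega⟩
  obtain ⟨l, rfl⟩ : ∃ l, n = k + l + 2 := ⟨n - k - 2, by omega⟩
  have e1 : k + l + 2 - (k + 1) = l + 1 := by omega
  have e3 : k + l + 2 - 1 = k + l + 1 := by omega
  rw [e1, e3, show l + 1 + 1 = l + 2 from rfl, show k + 1 + 1 = k + 2 from rfl, show k + l + 2 = (k + l) + 2 from rfl, phi_step (k + l), phi_step k,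
    phi_step l]
  have hpk := phi_pos (k + 1)
  have hpl := phi_pos (l + 1)
  have hpn := phi_pos (k + l + 1)
  have h1 : (2 * ((k : ℝ) + l) + 1) ≠ 0 := by positivity
  push_cast
  field_simp
  ring
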